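/- For the polynomial ring ℂ[x₁,x₂,x₃,x₄], the kernel of the ring homomorphism ℂ[O₁,O₂,O₃,O₄] → ℂ[φ₁,φ₂,χ₁,χ₂] sending O₁ ↦ φ₁χ₁, O₂ ↦ φ₁χ₂, O₃ ↦ φ₂χ₁, O₄ ↦ φ₂χ₂ is the principal ideal generated by O₁O₄ − O₂O₃. -/

import Mathlib

open MvPolynomial

namespace ConifoldAux

noncomputable section

/-- images of the variables -/
abbrev vv : Fin 4 → MvPolynomial (Fin 4) ℂ := ![X 0 * X 2, X 0 * X 3, X 1 * X 2, X 1 * X 3]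

abbrev ee (i : Fin 4) : Fin 4 →₀ ℕ := Finsupp.single i 1

def ww : Fin 4 → (Fin 4 →₀ ℕ) := ![ee 0 + ee 2, ee 0 + ee 3, ee 1 + ee 2, ee 1 + ee 3]

/-- the induced map on exponents -/
def T (m : Fin 4 →₀ ℕ) : Fin 4 →₀ ℕ := ∑ i : Fin 4, m i • ww i

lemma vv_eq (i : Fin 4) : vv i = monomial (ww i) (1 : ℂ) := by
  fin_cases i <;>
    simp [ww, X, monomial_mul]

lemma T_apply (m : Fin 4 →₀ ℕ) (j : Fin 4) :
    T m j = m 0 * ww 0 j + m 1 * ww 1 j + m 2 * ww 2 j + m 3 * ww 3 j := by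
  simp [T, Fin.sum_univ_four, mul_comm]

lemma ww_vals : (ww 0 0 = 1 ∧ ww 0 1 = 0 ∧ ww 0 2 = 1 ∧ ww 0 3 = 0) ∧
    (ww 1 0 = 1 ∧ ww 1 1 = 0 ∧ ww 1 2 = 0 ∧ ww 1 3 = 1) ∧
    (ww 2 0 = 0 ∧ ww 2 1 = 1 ∧ ww 2 2 = 1 ∧ ww 2 3 = 0) ∧
    (ww 3 0 = 0 ∧ ww 3 1 = 1 ∧ ww 3 2 = 0 ∧ ww 3 3 = 1) := by
  simp [ww, Finsupp.single_apply]

abbrev P (m : Fin 4 →₀ ℕ) : Prop := m 0 = 0 ∨ m 3 = 0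

lemma T_inj {m m' : Fin 4 →₀ ℕ} (hm : P m) (hm' : P m') (h : T m = T m') : m = m' := by
  have e0 := congrArg (fun f => f 0) h
  have e1 := congrArg (fun f => f 1) h
  have e2 := congrArg (fun f => f 2) h
  have e3 := congrArg (fun f => f 3) h
  simp [T_apply, ww, Finsupp.single_apply] at e0 e1 e2 e3
  have key : m 0 = m' 0 ∧ m 1 = m' 1 ∧ m 2 = m' 2 ∧ m 3 = m' 3 := by
    rcases hm with hm | hm <;> rcases hm' with hm' | hm' <;> omega
  ext j; fin_cases j
  · exact key.1
  · exact key.2.1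
  · exact key.2.2.1
  · exact key.2.2.2

lemma aeval_mono (m : Fin 4 →₀ ℕ) (c : ℂ) :
    aeval vv (monomial m c) = monomial (T m) c := by
  rw [aeval_monomial]
  have hprod : (m.prod fun i e => vv i ^ e) = monomial (T m) (1 : ℂ) := by
    rw [Finsupp.prod_fintype _ _ (fun i => pow_zero _)]
    simp only [vv_eq, monomial_pow, one_pow]
    simp [Fin.prod_univ_four, monomial_mul, T, Fin.sum_univ_four]
  rw [hprod]
  simp [algebraMap_eq, C_mul_monomial]

abbrev Red (p : MvPolynomial (Fin 4) ℂ) : Prop := ∀ m ∈ p.support, P m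

lemma red_add {p q} (hp : Red p) (hq : Red q) : Red (p + q) := fun m hm => by
  rcases Finset.mem_union.1 (MvPolynomial.support_add hm) with h | h
  exacts [hp m h, hq m h]

lemma red_mono {m c} (hm : P m) : Red (monomial m c) := fun u hu => by
  have := MvPolynomial.support_monomial_subset hu
  simp only [Finset.mem_singleton] at this
  rwa [this]

/-- the conifold relation, as a polynomial in the source variables -/
abbrev frel : MvPolynomial (Fin 4) ℂ := X 0 * X 3 - X 1 * X 2

abbrev I : Ideal (MvPolynomial (Fin 4) ℂ) := Ideal.span {frel}

lemma frel_eq : frel = monomial (ee 0 + ee 3) 1 - monomial (ee 1 + ee 2) 1 := by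
  show X 0 * X 3 - X 1 * X 2 = _
  simp [X, monomial_mul]

lemma reduce_mono : ∀ n (m : Fin 4 →₀ ℕ), m 0 ≤ n → ∀ c : ℂ,
    ∃ r, Red r ∧ monomial m c - r ∈ I := by
  intro n
  induction n with
  | zero =>
    intro m hm c
    exact ⟨monomial m c, red_mono (Or.inl (Nat.le_zero.1 hm)), by simp⟩
  | succ n ih =>
    intro m hm c
    by_cases hP : P m
    · exact ⟨monomial m c, red_mono hP, by simp⟩
    · have h0 : 1 ≤ m 0 := by
        rcases Nat.eq_zero_or_pos (m 0) with h | h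
        · exact absurd (Or.inl h) hP
        · exact h
      have h3 : 1 ≤ m 3 := by
        rcases Nat.eq_zero_or_pos (m 3) with h | h
        · exact absurd (Or.inr h) hP
        · exact h
      set m'' : Fin 4 →₀ ℕ := m - (ee 0 + ee 3) with hm''
      have hle : ee 0 + ee 3 ≤ m := by
        rw [Finsupp.le_def]
        intro j
        fin_cases j <;> simp [Finsupp.single_apply] <;> omega
      have hcancel : m'' + (ee 0 + ee 3) = m := tsub_add_cancel_of_le hle
      set m' : Fin 4 →₀ ℕ := m'' + (ee 1 + ee 2) with hm'
      have hm'0 : m' 0 ≤ n := by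
        have hsub : m'' 0 = m 0 - 1 := by
          rw [hm'']
          simp [Finsupp.single_apply]
        have : m' 0 = m'' 0 := by
          rw [hm']
          simp [Finsupp.single_apply]
        omega
      obtain ⟨r, hr, hrI⟩ := ih m' hm'0 c
      refine ⟨r, hr, ?_⟩
      have hkey : monomial m c - monomial m' c = monomial m'' c * frel := by
        rw [frel_eq, mul_sub, monomial_mul, monomial_mul, mul_one, hcancel, hm']
      have : monomial m c - r = (monomial m' c - r) + monomial m'' c * frel := by
        rw [← hkey]; ring
      rw [this]
      exact Ideal.add_mem _ hrI (Ideal.mul_mem_left _ _ (Ideal.subset_span rfl))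

lemma exists_red (p : MvPolynomial (Fin 4) ℂ) : ∃ r, Red r ∧ p - r ∈ I := by
  induction p using MvPolynomial.induction_on' with
  | monomial u a => exact reduce_mono (u 0) u le_rfl a
  | add p q hp hq =>
    obtain ⟨r1, hr1, h1⟩ := hp
    obtain ⟨r2, hr2, h2⟩ := hq
    refine ⟨r1 + r2, red_add hr1 hr2, ?_⟩
    have : p + q - (r1 + r2) = (p - r1) + (q - r2) := by ring
    rw [this]
    exact Ideal.add_mem _ h1 h2

lemma red_inj {r : MvPolynomial (Fin 4) ℂ} (hr : Red r) (h0 : aeval vv r = 0) : r = 0 := by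
  by_contra hne
  obtain ⟨m, hm⟩ := Finset.nonempty_iff_ne_empty.2
    (fun h => hne (MvPolynomial.support_eq_empty.1 h))
  have hsum : aeval vv r = ∑ u ∈ r.support, monomial (T u) (coeff u r) := by
    conv_lhs => rw [r.as_sum]
    rw [map_sum]
    exact Finset.sum_congr rfl fun u _ => aeval_mono u _
  have hcoeff : coeff (T m) (aeval vv r) = coeff m r := by
    rw [hsum, MvPolynomial.coeff_sum]
    rw [Finset.sum_eq_single_of_mem m hm]
    · simp [coeff_monomial]
    · intro u hu hne'
      rw [coeff_monomial, if_neg]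
      intro hT
      exact hne' (T_inj (hr u hu) (hr m hm) hT)
  rw [h0] at hcoeff
  simp only [coeff_zero] at hcoeff
  exact (MvPolynomial.mem_support_iff.1 hm) hcoeff.symm

lemma aeval_frel : aeval vv frel = 0 := by
  simp only [frel, map_sub, map_mul, aeval_X]
  show vv 0 * vv 3 - vv 1 * vv 2 = 0
  simp [vv]
  ring

end

end ConifoldAux

/-- The kernel of the ring map `ℂ[O₁,O₂,O₃,O₄] → ℂ[φ₁,φ₂,χ₁,χ₂]` sending
`O₁ ↦ φ₁χ₁, O₂ ↦ φ₁χ₂, O₃ ↦ φ₂χ₁, O₄ ↦ φ₂χ₂` is the principal ideal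
generated by `O₁O₄ − O₂O₃` (the conifold relation).
Here the target variables are `X 0 = φ₁, X 1 = φ₂, X 2 = χ₁, X 3 = χ₂`. -/
theorem stmt1 :
    RingHom.ker ((MvPolynomial.aeval
        (![X 0 * X 2, X 0 * X 3, X 1 * X 2, X 1 * X 3] :
          Fin 4 → MvPolynomial (Fin 4) ℂ)).toRingHom :
        MvPolynomial (Fin 4) ℂ →+* MvPolynomial (Fin 4) ℂ)
      = Ideal.span {(X 0 * X 3 - X 1 * X 2 : MvPolynomial (Fin 4) ℂ)} := by
  open ConifoldAux in
  apply le_antisymm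
  · -- ker ≤ span
    intro p hp
    have hp0 : aeval vv p = 0 := hp
    obtain ⟨r, hr, hrI⟩ := exists_red p
    have hIr : aeval vv (p - r) = 0 := by
      rw [Ideal.mem_span_singleton] at hrI
      obtain ⟨q, hq⟩ := hrI
      rw [hq, map_mul, aeval_frel, zero_mul]
    have hr0 : aeval vv r = 0 := by
      have h := map_sub (aeval vv) p r
      rw [hIr, hp0, zero_sub] at h
      exact neg_eq_zero.mp h.symm
    rw [red_inj hr hr0, sub_zero] at hrI
    exact hrI
  · -- span ≤ ker
    rw [Ideal.span_le]
    rintro x rfl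
    exact aeval_frel
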